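/- Let 0 < H < 1/2, c_H = 1/(Γ(H+1/2)Γ(1/2−H)), ξ_0 > 0, T > 0, and w_0 = (c_H/(1/2−H)) ξ_0^{1/2−H}. Then ∫_0^T |c_H ∫_0^{ξ_0} e^{−tx} x^{−H−1/2} dx − w_0|^2 dt ≤ (c_H^2 T^3 / (3(3/2−H)^2)) · ξ_0^{3−2H}. -/
import Mathlib


open Real MeasureTheory

/-- L² error bound for the small-`x` part of the Laplace representation. -/
theorem stmt_5 (H : ℝ) (hH0 : 0 < H) (hH1 : H < 1/2) (ξ0 T : ℝ) (hξ : 0 < ξ0)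
    (hT : 0 < T) :
    (∫ t in (0 : ℝ)..T,
        |(1 / (Real.Gamma (H + 1/2) * Real.Gamma (1/2 - H))) *
            (∫ x in Set.Ioc (0 : ℝ) ξ0, Real.exp (-(t * x)) * x ^ (-H - 1/2))
          - (1 / (Real.Gamma (H + 1/2) * Real.Gamma (1/2 - H))) / (1/2 - H)
              * ξ0 ^ ((1:ℝ)/2 - H)| ^ 2)
      ≤ (1 / (Real.Gamma (H + 1/2) * Real.Gamma (1/2 - H))) ^ 2 * T ^ 3
          / (3 * (3/2 - H) ^ 2) * ξ0 ^ (3 - 2 * H) := by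
  set c : ℝ := 1 / (Real.Gamma (H + 1/2) * Real.Gamma (1/2 - H)) with hc
  have hc0 : 0 < c := by
    apply div_pos one_pos
    exact mul_pos (Real.Gamma_pos_of_pos (by linarith)) (Real.Gamma_pos_of_pos (by linarith))
  set s : ℝ := -H - 1/2 with hs
  have hs1 : (-1 : ℝ) < s := by rw [hs]; linarith
  have hs1' : (-1 : ℝ) < s + 1 := by linarith
  -- integrability of rpow on Ioc
  have hint_rpow : ∀ r : ℝ, -1 < r → IntegrableOn (fun x : ℝ => x ^ r) (Set.Ioc 0 ξ0) := by
    intro r hr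
    have := (intervalIntegral.integrableOn_Ioo_rpow_iff (s := r) hξ).2 hr
    exact this.congr_set_ae Ioo_ae_eq_Ioc.symm
  -- value of ∫ x^s over Ioc 0 ξ0
  have hval : ∀ r : ℝ, -1 < r →
      (∫ x in Set.Ioc (0:ℝ) ξ0, x ^ r) = ξ0 ^ (r + 1) / (r + 1) := by
    intro r hr
    rw [← intervalIntegral.integral_of_le hξ.le, integral_rpow (Or.inl hr),
      Real.zero_rpow (by linarith : r + 1 ≠ 0), sub_zero]
  set K : ℝ := ξ0 ^ ((3:ℝ)/2 - H) / (3/2 - H) with hK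
  have hK0 : 0 ≤ K := by
    apply div_nonneg (Real.rpow_nonneg hξ.le _) (by linarith)
  -- pointwise bound on the inner error
  have key : ∀ t : ℝ, 0 ≤ t →
      |c * (∫ x in Set.Ioc (0 : ℝ) ξ0, Real.exp (-(t * x)) * x ^ s)
        - c / (1/2 - H) * ξ0 ^ ((1:ℝ)/2 - H)| ≤ c * K * t := by
    intro t ht
    have hXS : IntegrableOn (fun x : ℝ => x ^ s) (Set.Ioc 0 ξ0) := hint_rpow s hs1
    have hXS1 : IntegrableOn (fun x : ℝ => x ^ (s + 1)) (Set.Ioc 0 ξ0) := hint_rpow _ hs1'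
    have hfi : IntegrableOn (fun x : ℝ => Real.exp (-(t * x)) * x ^ s) (Set.Ioc 0 ξ0) := by
      apply Integrable.mono' hXS
      · have hm : Measurable (fun x : ℝ =>
            Real.exp (-(t * x)) * Real.exp (Real.log x * s)) :=
          (Real.measurable_exp.comp (measurable_const.mul measurable_id).neg).mul
            (Real.measurable_exp.comp (Real.measurable_log.mul measurable_const))
        refine hm.aestronglyMeasurable.congr ?_
        filter_upwards [MeasureTheory.ae_restrict_mem measurableSet_Ioc] with x hx
        rw [Real.rpow_def_of_pos hx.1]
      · filter_upwards [MeasureTheory.ae_restrict_mem measurableSet_Ioc] with x hx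
        have hx0 : 0 < x := hx.1
        rw [norm_mul, Real.norm_eq_abs, Real.norm_eq_abs, abs_of_pos (Real.exp_pos _),
          abs_of_pos (Real.rpow_pos_of_pos hx0 _)]
        calc Real.exp (-(t * x)) * x ^ s ≤ 1 * x ^ s := by
              apply mul_le_mul_of_nonneg_right _ (Real.rpow_pos_of_pos hx0 _).le
              exact Real.exp_le_one_iff.2 (neg_nonpos.2 (mul_nonneg ht hx0.le))
          _ = x ^ s := one_mul _
    have hgi : IntegrableOn (fun x : ℝ => (Real.exp (-(t * x)) - 1) * x ^ s) (Set.Ioc 0 ξ0) := by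
      refine (hfi.sub hXS).congr ?_
      filter_upwards with x
      simp only [Pi.sub_apply]
      ring
    have hw0 : c / (1/2 - H) * ξ0 ^ ((1:ℝ)/2 - H) = c * ∫ x in Set.Ioc (0:ℝ) ξ0, x ^ s := by
      rw [hval s hs1]
      have : s + 1 = 1/2 - H := by rw [hs]; ring
      rw [this]; ring
    rw [hw0, ← mul_sub, abs_mul, abs_of_pos hc0,
      ← MeasureTheory.integral_sub hfi hXS]
    have hsub : (∫ x in Set.Ioc (0:ℝ) ξ0,
        (Real.exp (-(t * x)) * x ^ s - x ^ s)) =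
        ∫ x in Set.Ioc (0:ℝ) ξ0, (Real.exp (-(t * x)) - 1) * x ^ s := by
      apply MeasureTheory.setIntegral_congr_fun measurableSet_Ioc
      intro x _; ring
    rw [hsub, mul_assoc]
    apply mul_le_mul_of_nonneg_left _ hc0.le
    calc |∫ x in Set.Ioc (0:ℝ) ξ0, (Real.exp (-(t * x)) - 1) * x ^ s|
        ≤ ∫ x in Set.Ioc (0:ℝ) ξ0, |(Real.exp (-(t * x)) - 1) * x ^ s| := by
          have h := MeasureTheory.norm_integral_le_integral_norm
            (μ := volume.restrict (Set.Ioc (0:ℝ) ξ0))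
            (fun x => (Real.exp (-(t * x)) - 1) * x ^ s)
          simpa only [Real.norm_eq_abs] using h
      _ ≤ ∫ x in Set.Ioc (0:ℝ) ξ0, t * x ^ (s + 1) := by
          apply MeasureTheory.setIntegral_mono_on hgi.abs (hXS1.const_mul t) measurableSet_Ioc
          intro x hx
          have hx0 : 0 < x := hx.1
          rw [abs_mul, abs_of_pos (Real.rpow_pos_of_pos hx0 _)]
          have h1 : |Real.exp (-(t * x)) - 1| ≤ t * x := by
            rw [abs_sub_comm, abs_of_nonneg (by
              have := Real.exp_le_one_iff.2 (neg_nonpos.2 (mul_nonneg ht hx0.le)); linarith)]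
            have := Real.add_one_le_exp (-(t * x))
            linarith
          calc |Real.exp (-(t * x)) - 1| * x ^ s ≤ (t * x) * x ^ s :=
                mul_le_mul_of_nonneg_right h1 (Real.rpow_pos_of_pos hx0 _).le
            _ = t * x ^ (s + 1) := by
                rw [Real.rpow_add hx0, Real.rpow_one]; ring
      _ = t * (ξ0 ^ (s + 2) / (s + 2)) := by
          rw [MeasureTheory.integral_const_mul, hval _ hs1']
          ring_nf
      _ = K * t := by
          have : s + 2 = 3/2 - H := by rw [hs]; ring
          rw [this, hK]; ring
  -- now integrate
  by_cases hInt : IntervalIntegrable (fun t =>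
      |c * (∫ x in Set.Ioc (0 : ℝ) ξ0, Real.exp (-(t * x)) * x ^ s)
        - c / (1/2 - H) * ξ0 ^ ((1:ℝ)/2 - H)| ^ 2) volume 0 T
  · have hmono : (∫ t in (0:ℝ)..T,
        |c * (∫ x in Set.Ioc (0 : ℝ) ξ0, Real.exp (-(t * x)) * x ^ s)
          - c / (1/2 - H) * ξ0 ^ ((1:ℝ)/2 - H)| ^ 2)
        ≤ ∫ t in (0:ℝ)..T, (c * K) ^ 2 * t ^ 2 := by
      apply intervalIntegral.integral_mono_on hT.le hInt
      · exact (intervalIntegral.intervalIntegrable_pow 2).const_mul _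
      · intro t ht
        have h := key t ht.1
        calc |c * (∫ x in Set.Ioc (0 : ℝ) ξ0, Real.exp (-(t * x)) * x ^ s)
            - c / (1/2 - H) * ξ0 ^ ((1:ℝ)/2 - H)| ^ 2 ≤ (c * K * t) ^ 2 := by
              apply sq_le_sq' _ h
              have : 0 ≤ c * K * t := mul_nonneg (mul_nonneg hc0.le hK0) ht.1
              have habs : 0 ≤ |c * (∫ x in Set.Ioc (0 : ℝ) ξ0, Real.exp (-(t * x)) * x ^ s)
                - c / (1/2 - H) * ξ0 ^ ((1:ℝ)/2 - H)| := abs_nonneg _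
              linarith
          _ = (c * K) ^ 2 * t ^ 2 := by ring
    have hval2 : (∫ t in (0:ℝ)..T, (c * K) ^ 2 * t ^ 2) = c ^ 2 * T ^ 3
          / (3 * (3/2 - H) ^ 2) * ξ0 ^ (3 - 2 * H) := by
      rw [intervalIntegral.integral_const_mul, integral_pow]
      have hK2 : K ^ 2 = ξ0 ^ (3 - 2 * H) / (3/2 - H) ^ 2 := by
        rw [hK, div_pow, ← Real.rpow_natCast (ξ0 ^ ((3:ℝ)/2 - H)) 2, ← Real.rpow_mul hξ.le]
        norm_num
        ring_nf
      rw [mul_pow, hK2]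
      have h32 : ((3:ℝ)/2 - H) ≠ 0 := by intro h; nlinarith
      field_simp
      ring
    calc _ ≤ ∫ t in (0:ℝ)..T, (c * K) ^ 2 * t ^ 2 := hmono
      _ = _ := hval2
  · rw [intervalIntegral.integral_undef hInt]
    have : 0 < ξ0 ^ (3 - 2 * H) := Real.rpow_pos_of_pos hξ _
    have h32 : (0:ℝ) < 3 * (3/2 - H) ^ 2 := by nlinarith
    positivity
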